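/- arXiv:1702.02361 — 2 statements merged into one kernel-verified Lean document; each statement's English description precedes it below -/
import Mathlib

section
/- Let E and F be nonzero vector bundles on a smooth projective curve X. If μ(E) > μ(F), then there exists a rational number μ such that rk(E_(μ))/rk(E) > rk(F_(μ))/rk(F). -/
/-! Suppose instead that `rk(E_(μ))/rk(E) ≤ rk(F_(μ))/rk(F)` for every `μ`. Enumerate all slopes
of `E` and `F` monotonically as `t₀ ≤ t₁ ≤ ⋯ ≤ tₙ`. Then `deg E = ∑ rᵢ sᵢ` telescopes into layers,
`deg E = rk(E) t₀ + ∑ⱼ rk(E_(tⱼ₊₁)) (tⱼ₊₁ - tⱼ)`, and likewise for `F`; comparing the two expansions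
layer by layer, each gap `tⱼ₊₁ - tⱼ` being nonnegative, gives `μ(E) ≤ μ(F)`. -/

open Finset

section LayerCake

variable {α : Type*} [LinearOrder α]

theorem Finset.exists_monotone_enumeration [Nonempty α] (T : Finset α) :
    ∃ t : ℕ → α, Monotone t ∧ ∃ n, ∀ x ∈ T, ∃ k ≤ n, t k = x := by
  rcases T.eq_empty_or_nonempty with rfl | hT
  · exact ⟨fun _ => Classical.arbitrary α, monotone_const, 0, by simp⟩
  obtain ⟨n, hn⟩ := Nat.exists_eq_add_one_of_ne_zero hT.card_pos.ne'
  let e := T.orderEmbOfFin hn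
  refine ⟨fun j => e ⟨min j n, Nat.lt_succ_of_le (min_le_right _ _)⟩, fun a b hab => ?_, n,
    fun x hx => ?_⟩
  · exact e.monotone (Fin.mk_le_mk.2 (min_le_min_right n hab))
  · obtain ⟨k, rfl⟩ : x ∈ Set.range e := by rwa [range_orderEmbOfFin]
    exact ⟨k, Nat.lt_succ_iff.1 k.isLt, by simp [min_eq_left (Nat.lt_succ_iff.1 k.isLt)]⟩

theorem Monotone.eq_add_sum_range_ite_le [AddCommGroup α] {t : ℕ → α} (ht : Monotone t)
    {k n : ℕ} (hkn : k ≤ n) :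
    t k = t 0 + ∑ j ∈ range n, if t (j + 1) ≤ t k then t (j + 1) - t j else 0 := by
  induction n, hkn using Nat.le_induction with
  | base =>
    rw [sum_congr rfl fun j hj => if_pos (ht (mem_range.1 hj)), sum_range_sub]
    abel
  | succ n hkn ih =>
    rw [sum_range_succ, ← add_assoc, ← ih]
    split_ifs with h
    · rw [le_antisymm (h.trans (ht hkn)) (ht n.le_succ), sub_self, add_zero]
    · rw [add_zero]

theorem Monotone.sum_mul_eq_add_sum_layers [CommRing α] {ι : Type*} [Fintype ι] {t : ℕ → α}
    (ht : Monotone t) {n : ℕ} (r s : ι → α) (hs : ∀ i, ∃ k ≤ n, t k = s i) :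
    ∑ i, r i * s i = (∑ i, r i) * t 0 +
      ∑ j ∈ range n, (∑ i ∈ univ.filter (fun i => t (j + 1) ≤ s i), r i) * (t (j + 1) - t j) := by
  have hlayers : ∀ i, s i = t 0 + ∑ j ∈ range n,
      if t (j + 1) ≤ s i then t (j + 1) - t j else 0 := by
    intro i
    obtain ⟨k, hk, hks⟩ := hs i
    rw [← hks]
    exact ht.eq_add_sum_range_ite_le hk
  calc ∑ i, r i * s i
      = ∑ i, (r i * t 0 + ∑ j ∈ range n,
          if t (j + 1) ≤ s i then r i * (t (j + 1) - t j) else 0) := by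
        refine sum_congr rfl fun i _ => ?_
        nth_rewrite 1 [hlayers i]
        simp only [mul_add, mul_sum, mul_ite, mul_zero]
    _ = _ := by
        simp only [sum_add_distrib, sum_mul, sum_filter, ite_mul, zero_mul]
        rw [sum_comm]

theorem sum_mul_le_sum_mul_of_sum_filter_le [CommRing α] [IsOrderedRing α]
    {ι κ : Type*} [Fintype ι] [Fintype κ] (p : ι → α) (q : κ → α) (s : ι → α) (s' : κ → α)
    (hpq : ∑ i, p i = ∑ j, q j)
    (h : ∀ μ, ∑ i ∈ univ.filter (fun i => μ ≤ s i), p i ≤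
      ∑ j ∈ univ.filter (fun j => μ ≤ s' j), q j) :
    ∑ i, p i * s i ≤ ∑ j, q j * s' j := by
  obtain ⟨t, ht, n, hT⟩ := (univ.image s ∪ univ.image s').exists_monotone_enumeration
  rw [ht.sum_mul_eq_add_sum_layers p s (fun i => hT _ (by simp)),
    ht.sum_mul_eq_add_sum_layers q s' (fun j => hT _ (by simp)), hpq]
  gcongr with j
  · exact sub_nonneg.2 (ht j.le_succ)
  · exact h _

end LayerCake

theorem exists_slope_rank_ratio_gt_general
    (kE kF : ℕ) (hkE : 0 < kE) (hkF : 0 < kF)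
    (rE : Fin kE → ℕ) (dE : Fin kE → ℤ) (sE : Fin kE → ℚ)
    (rF : Fin kF → ℕ) (dF : Fin kF → ℤ) (sF : Fin kF → ℚ)
    (hrE : ∀ i, 0 < rE i) (hrF : ∀ i, 0 < rF i)
    (hsE : ∀ i, sE i = (dE i : ℚ) / (rE i : ℚ))
    (hsF : ∀ i, sF i = (dF i : ℚ) / (rF i : ℚ))
    -- μ(E) > μ(F)
    (hslope : (∑ i, (dE i : ℚ)) / (∑ i, (rE i : ℚ))
            > (∑ i, (dF i : ℚ)) / (∑ i, (rF i : ℚ))) :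
    ∃ μ : ℚ,
      (∑ i ∈ Finset.univ.filter (fun i => μ ≤ sE i), (rE i : ℚ)) / (∑ i, (rE i : ℚ))
        > (∑ i ∈ Finset.univ.filter (fun i => μ ≤ sF i), (rF i : ℚ)) / (∑ i, (rF i : ℚ)) := by
  by_contra! hdom
  set RE := ∑ i, (rE i : ℚ)
  set RF := ∑ i, (rF i : ℚ)
  have hRE : 0 < RE := sum_pos (fun i _ => mod_cast hrE i) ⟨⟨0, hkE⟩, mem_univ _⟩
  have hRF : 0 < RF := sum_pos (fun i _ => mod_cast hrF i) ⟨⟨0, hkF⟩, mem_univ _⟩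
  have hdE : ∀ i, (rE i : ℚ) * sE i = dE i := fun i => by
    rw [hsE, mul_div_cancel₀ _ (by exact_mod_cast (hrE i).ne')]
  have hdF : ∀ i, (rF i : ℚ) * sF i = dF i := fun i => by
    rw [hsF, mul_div_cancel₀ _ (by exact_mod_cast (hrF i).ne')]
  have hmean := sum_mul_le_sum_mul_of_sum_filter_le (fun i => rE i * RF) (fun j => rF j * RE)
    sE sF (by rw [← sum_mul, ← sum_mul, mul_comm]) fun μ => by
      simpa only [← sum_mul, div_le_div_iff₀ hRE hRF] using hdom μ
  simp only [mul_right_comm _ _ (sE _), mul_right_comm _ _ (sF _), hdE, hdF, ← sum_mul] at hmean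
  rw [gt_iff_lt, div_lt_div_iff₀ hRF hRE] at hslope
  linarith

/-- Let E and F be nonzero vector bundles on a smooth projective curve,
encoded by their Harder–Narasimhan data: `kE` (resp. `kF`) graded pieces with positive
ranks `rE i` and degrees `dE i`, whose slopes `sE i = dE i / rE i` are strictly
decreasing.  The term `E_(μ)` of the HN filtration has rank `∑_{sE i ≥ μ} rE i`.
If μ(E) > μ(F) then there is a rational μ with
rk(E_(μ))/rk(E) > rk(F_(μ))/rk(F). -/
theorem exists_slope_rank_ratio_gt
    (kE kF : ℕ) (hkE : 0 < kE) (hkF : 0 < kF)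
    (rE : Fin kE → ℕ) (dE : Fin kE → ℤ) (sE : Fin kE → ℚ)
    (rF : Fin kF → ℕ) (dF : Fin kF → ℤ) (sF : Fin kF → ℚ)
    (hrE : ∀ i, 0 < rE i) (hrF : ∀ i, 0 < rF i)
    (hsE : ∀ i, sE i = (dE i : ℚ) / (rE i : ℚ))
    (hsF : ∀ i, sF i = (dF i : ℚ) / (rF i : ℚ))
    (hEdec : StrictAnti sE) (hFdec : StrictAnti sF)
    -- μ(E) > μ(F)
    (hslope : (∑ i, (dE i : ℚ)) / (∑ i, (rE i : ℚ))
            > (∑ i, (dF i : ℚ)) / (∑ i, (rF i : ℚ))) :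
    ∃ μ : ℚ,
      (∑ i ∈ Finset.univ.filter (fun i => μ ≤ sE i), (rE i : ℚ)) / (∑ i, (rE i : ℚ))
        > (∑ i ∈ Finset.univ.filter (fun i => μ ≤ sF i), (rF i : ℚ)) / (∑ i, (rF i : ℚ)) :=
  exists_slope_rank_ratio_gt_general kE kF hkE hkF rE dE sE rF dF sF hrE hrF hsE hsF hslope
end

section
/- Let S = (F_1 →^ψ F_0) be a triple of type α^⊥ (ψ surjective, rk(F_1) = 2 rk(F_0), μ(F_0) − μ(F_1) = α). Then for any triple T = (E_1 →^φ E_0), the map π = −φ⊗id_{F_0} + id_{E_0}⊗ψ : (E_1 ⊗ F_0) ⊕ (E_0 ⊗ F_1) → E_0 ⊗ F_0 is surjective, and its kernel satisfies rk(ker π) = rk(F_0)(rk E_1 + rk E_0) and μ(ker π) = μ_α(T) + μ(F_0). -/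
open CategoryTheory CategoryTheory.Limits MonoidalCategory

/-!
The summand `E₀ ◁ ψ` of `π` is already surjective, so `π` is, and the kernel's rank and degree
follow from additivity in `0 → ker π → (E₁ ⊗ F₀) ⊞ (E₀ ⊗ F₁) → E₀ ⊗ F₀ → 0`. Rewriting
`deg F₁ = 2 deg F₀ - 2α rk F₀` (the α^⊥ condition) gives
`deg (ker π) = rk F₀ (deg E₀ + deg E₁ - 2α rk E₀) + deg F₀ (rk E₀ + rk E₁)`,
which splits into the two slopes.
-/

theorem deg_eq_two_mul_sub_of_div_sub_div_eq {r₀ r₁ : ℕ} {d₀ d₁ : ℤ} {α : ℚ}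
    (hr : r₁ = 2 * r₀) (hr₀ : 0 < r₀) (hα : (d₀ : ℚ) / r₀ - d₁ / r₁ = α) :
    (d₁ : ℚ) = 2 * d₀ - 2 * α * r₀ := by
  subst hα hr
  have : (r₀ : ℚ) ≠ 0 := by positivity
  push_cast
  field_simp
  ring

theorem mul_add_mul_div_mul_eq_div_add_div {K : Type*} [Field K] {c s : K} (x e : K)
    (hc : c ≠ 0) (hs : s ≠ 0) : (c * x + e * s) / (c * s) = x / s + e / c := by
  field_simp

/-- Work in the abelian (monoidal) category of coherent sheaves on a
smooth projective curve X, with rank and degree functions that are additive in short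
exact sequences and satisfy deg(A⊗B) = rk(A)deg(B) + rk(B)deg(A).  Let
S = (F₁ →^ψ F₀) be a triple of type α^⊥ (ψ surjective, rk F₁ = 2·rk F₀,
μ(F₀) − μ(F₁) = α).  Then for any triple T = (E₁ →^φ E₀) the map
π = −φ⊗id_{F₀} + id_{E₀}⊗ψ : (E₁ ⊗ F₀) ⊕ (E₀ ⊗ F₁) → E₀ ⊗ F₀ is surjective,
rk(ker π) = rk(F₀)(rk E₁ + rk E₀) and μ(ker π) = μ_α(T) + μ(F₀). -/
theorem orthogonal_type_kernel_invariants
    {C : Type*} [Category C] [Abelian C] [MonoidalCategory C]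
    (rk : C → ℕ) (deg : C → ℤ)
    -- multiplicativity under tensor product
    (hrk_tensor : ∀ A B : C, rk (A ⊗ B) = rk A * rk B)
    (hdeg_tensor : ∀ A B : C, deg (A ⊗ B) = (rk A : ℤ) * deg B + (rk B : ℤ) * deg A)
    -- additivity on direct sums
    (hrk_biprod : ∀ A B : C, rk (A ⊞ B) = rk A + rk B)
    (hdeg_biprod : ∀ A B : C, deg (A ⊞ B) = deg A + deg B)
    -- additivity in the short exact sequence 0 → ker f → A → B → 0
    (hrk_ker : ∀ {A B : C} (f : A ⟶ B), Epi f → rk A = rk (kernel f) + rk B)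
    (hdeg_ker : ∀ {A B : C} (f : A ⟶ B), Epi f → deg A = deg (kernel f) + deg B)
    -- tensoring with a surjection stays surjective
    (hepi_whisker : ∀ {A B : C} (X : C) (f : A ⟶ B), Epi f → Epi (X ◁ f))
    (α : ℚ)
    (F1 F0 : C) (ψ : F1 ⟶ F0) (hψ : Epi ψ)
    (hrkF : rk F1 = 2 * rk F0) (hF0 : 0 < rk F0)
    (hαF : (deg F0 : ℚ) / (rk F0 : ℚ) - (deg F1 : ℚ) / (rk F1 : ℚ) = α)
    (E1 E0 : C) (φ : E1 ⟶ E0) (hT : 0 < rk E0 + rk E1) :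
    Epi (biprod.desc (-(φ ▷ F0)) (E0 ◁ ψ))
    ∧ rk (kernel (biprod.desc (-(φ ▷ F0)) (E0 ◁ ψ))) = rk F0 * (rk E1 + rk E0)
    ∧ (deg (kernel (biprod.desc (-(φ ▷ F0)) (E0 ◁ ψ))) : ℚ)
          / (rk (kernel (biprod.desc (-(φ ▷ F0)) (E0 ◁ ψ))) : ℚ)
      = ((deg E0 : ℚ) + (deg E1 : ℚ) - 2 * α * (rk E0 : ℚ))
          / ((rk E0 : ℚ) + (rk E1 : ℚ))
        + (deg F0 : ℚ) / (rk F0 : ℚ) := by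
  set π := biprod.desc (-(φ ▷ F0)) (E0 ◁ ψ)
  have hEψ : Epi (E0 ◁ ψ) := hepi_whisker E0 ψ hψ
  have hπ : Epi π := biprod.epi_desc_of_epi_right _ _
  have hrk := hrk_ker π hπ
  have hdeg := hdeg_ker π hπ
  rw [hrk_biprod, hrk_tensor, hrk_tensor, hrk_tensor, hrkF] at hrk
  rw [hdeg_biprod, hdeg_tensor, hdeg_tensor, hdeg_tensor, hrkF] at hdeg
  have hrkK : rk (kernel π) = rk F0 * (rk E1 + rk E0) := by linarith
  have hdegF1 := deg_eq_two_mul_sub_of_div_sub_div_eq hrkF hF0 hαF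
  have hdegK : (deg (kernel π) : ℚ) = rk F0 * (deg E0 + deg E1 - 2 * α * rk E0)
      + deg F0 * (rk E0 + rk E1) := by
    have hdegQ : (_ : ℚ) = _ := congrArg (Int.cast (R := ℚ)) hdeg
    push_cast at hdegQ
    linear_combination rk E0 * hdegF1 - hdegQ
  refine ⟨hπ, hrkK, ?_⟩
  rw [hdegK, hrkK, Nat.cast_mul, Nat.cast_add, add_comm (rk E1 : ℚ)]
  exact mul_add_mul_div_mul_eq_div_add_div _ _ (by positivity) (by exact_mod_cast hT.ne')
end
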